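/- arXiv:1105.0629 — 3 statements merged into one kernel-verified Lean document; each statement's English description precedes it below -/
import Mathlib

section
/- Let ν, κ, λ be real constants with λ ≠ 0, and let f : ℝ × ℝ × ℝ → ℝ be a four times continuously differentiable solution of the (2+1)-dimensional Kuramoto–Sivashinsky equation. Then for every s ∈ ℝ the Galilean-boosted function (x,y,t) ↦ f(x + s·t, y, t) + (2·x·s + t·s²)/(4λ) is again a solution of the Kuramoto–Sivashinsky equation. (Invariance under the one-parameter group G₆ generated by the Galilean boost V₆ = t∂ₓ + (x/(2λ))∂ₕ.) -/
/-!
Under the shift `x ↦ x + s t` the spatial derivatives are merely transported, while `∂ₜ` picks up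
`s ∂ₓh`. The potential `(2xs + ts²)/(4λ)` adds `s/(2λ)` to `∂ₓh` and `s²/(4λ)` to `∂ₜh`, so the
nonlinear term `-λ (∂ₓh + s/(2λ))²` contributes `-s ∂ₓh - s²/(4λ)` and cancels both: the K-S
operator of the boosted function is that of `f` at the shifted point.
-/

noncomputable section

/-- Partial derivative in the first (x) variable. -/
def Dx (h : ℝ × ℝ × ℝ → ℝ) : ℝ × ℝ × ℝ → ℝ :=
  fun p => deriv (fun x : ℝ => h (x, p.2.1, p.2.2)) p.1

/-- Partial derivative in the second (y) variable. -/
def Dy (h : ℝ × ℝ × ℝ → ℝ) : ℝ × ℝ × ℝ → ℝ :=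
  fun p => deriv (fun y : ℝ => h (p.1, y, p.2.2)) p.2.1

/-- Partial derivative in the third (t) variable. -/
def Dt (h : ℝ × ℝ × ℝ → ℝ) : ℝ × ℝ × ℝ → ℝ :=
  fun p => deriv (fun t : ℝ => h (p.1, p.2.1, t)) p.2.2

/-- The left-hand side of the (2+1)-dimensional Kuramoto–Sivashinsky equation:
∂ₜh + ν(∂ₓₓh + ∂ᵧᵧh) + κ(∂ₓₓₓₓh + 2∂ₓₓᵧᵧh + ∂ᵧᵧᵧᵧh) − λ((∂ₓh)² + (∂ᵧh)²). -/
def KSLhs (ν κ lam : ℝ) (h : ℝ × ℝ × ℝ → ℝ) : ℝ × ℝ × ℝ → ℝ :=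
  fun p =>
    Dt h p + ν * (Dx (Dx h) p + Dy (Dy h) p)
      + κ * (Dx (Dx (Dx (Dx h))) p + 2 * Dx (Dx (Dy (Dy h))) p + Dy (Dy (Dy (Dy h))) p)
      - lam * ((Dx h p) ^ 2 + (Dy h p) ^ 2)

/-- A C⁴ solution of the (2+1)-dimensional Kuramoto–Sivashinsky equation. -/
def IsKSSolution (ν κ lam : ℝ) (h : ℝ × ℝ × ℝ → ℝ) : Prop :=
  ContDiff ℝ 4 h ∧ ∀ p : ℝ × ℝ × ℝ, KSLhs ν κ lam h p = 0

def galileanShift (s : ℝ) (p : ℝ × ℝ × ℝ) : ℝ × ℝ × ℝ := (p.1 + s * p.2.2, p.2.1, p.2.2)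

def boostPotential (lam s : ℝ) (p : ℝ × ℝ × ℝ) : ℝ := (2 * p.1 * s + p.2.2 * s ^ 2) / (4 * lam)

def galileanBoost (lam s : ℝ) (h : ℝ × ℝ × ℝ → ℝ) : ℝ × ℝ × ℝ → ℝ :=
  h ∘ galileanShift s + boostPotential lam s

section PartialDerivatives

variable {h u : ℝ × ℝ × ℝ → ℝ} {p : ℝ × ℝ × ℝ}

lemma Dx_eq_fderiv (hh : DifferentiableAt ℝ h p) : Dx h p = fderiv ℝ h p (1, 0, 0) :=
  (hh.hasFDerivAt.comp_hasDerivAt p.1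
    ((hasDerivAt_id p.1).prodMk (hasDerivAt_const p.1 (p.2.1, p.2.2)))).deriv

lemma Dy_eq_fderiv (hh : DifferentiableAt ℝ h p) : Dy h p = fderiv ℝ h p (0, 1, 0) :=
  (hh.hasFDerivAt.comp_hasDerivAt p.2.1 ((hasDerivAt_const p.2.1 p.1).prodMk
    ((hasDerivAt_id p.2.1).prodMk (hasDerivAt_const p.2.1 p.2.2)))).deriv

lemma Dt_eq_fderiv (hh : DifferentiableAt ℝ h p) : Dt h p = fderiv ℝ h p (0, 0, 1) :=
  (hh.hasFDerivAt.comp_hasDerivAt p.2.2 ((hasDerivAt_const p.2.2 p.1).prodMk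
    ((hasDerivAt_const p.2.2 p.2.1).prodMk (hasDerivAt_id p.2.2)))).deriv

lemma fderiv_apply_eq_partials (hh : DifferentiableAt ℝ h p) (a b c : ℝ) :
    fderiv ℝ h p (a, b, c) = a * Dx h p + b * Dy h p + c * Dt h p := by
  have hv : ((a, b, c) : ℝ × ℝ × ℝ) = a • (1, 0, 0) + b • (0, 1, 0) + c • (0, 0, 1) := by simp
  rw [hv, map_add, map_add, map_smul, map_smul, map_smul, Dx_eq_fderiv hh, Dy_eq_fderiv hh,
    Dt_eq_fderiv hh, smul_eq_mul, smul_eq_mul, smul_eq_mul]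

lemma Dx_add (hh : Differentiable ℝ h) (hu : Differentiable ℝ u) : Dx (h + u) = Dx h + Dx u := by
  ext p
  rw [Pi.add_apply, Dx_eq_fderiv (hh p), Dx_eq_fderiv (hu p), Dx_eq_fderiv ((hh p).add (hu p)),
    fderiv_add (hh p) (hu p)]
  rfl

lemma Dy_add (hh : Differentiable ℝ h) (hu : Differentiable ℝ u) : Dy (h + u) = Dy h + Dy u := by
  ext p
  rw [Pi.add_apply, Dy_eq_fderiv (hh p), Dy_eq_fderiv (hu p), Dy_eq_fderiv ((hh p).add (hu p)),
    fderiv_add (hh p) (hu p)]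
  rfl

lemma Dt_add (hh : Differentiable ℝ h) (hu : Differentiable ℝ u) : Dt (h + u) = Dt h + Dt u := by
  ext p
  rw [Pi.add_apply, Dt_eq_fderiv (hh p), Dt_eq_fderiv (hu p), Dt_eq_fderiv ((hh p).add (hu p)),
    fderiv_add (hh p) (hu p)]
  rfl

lemma Dx_add_const (h : ℝ × ℝ × ℝ → ℝ) (c : ℝ) : Dx (h + fun _ => c) = Dx h := by
  ext p
  exact deriv_add_const c

end PartialDerivatives

section GalileanShift

variable (s : ℝ)

lemma contDiff_galileanShift {n : WithTop ℕ∞} : ContDiff ℝ n (galileanShift s) := by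
  unfold galileanShift
  fun_prop

lemma Dx_comp_galileanShift (h : ℝ × ℝ × ℝ → ℝ) :
    Dx (h ∘ galileanShift s) = Dx h ∘ galileanShift s := by
  ext p
  exact deriv_comp_add_const (fun x => h (x, p.2.1, p.2.2)) (s * p.2.2) p.1

lemma Dy_comp_galileanShift (h : ℝ × ℝ × ℝ → ℝ) :
    Dy (h ∘ galileanShift s) = Dy h ∘ galileanShift s := rfl

lemma Dt_comp_galileanShift {h : ℝ × ℝ × ℝ → ℝ} (hh : Differentiable ℝ h) :
    Dt (h ∘ galileanShift s) = Dt h ∘ galileanShift s + s • Dx h ∘ galileanShift s := by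
  ext p
  have hpath : HasDerivAt (fun t => galileanShift s (p.1, p.2.1, t)) (s, 0, 1) p.2.2 := by
    refine HasDerivAt.prodMk ?_ ((hasDerivAt_const _ _).prodMk (hasDerivAt_id _))
    simpa using ((hasDerivAt_id p.2.2).const_mul s).const_add p.1
  change deriv (h ∘ fun t => galileanShift s (p.1, p.2.1, t)) p.2.2 = _
  rw [((hh _).hasFDerivAt.comp_hasDerivAt p.2.2 hpath).deriv, fderiv_apply_eq_partials (hh _)]
  simp only [Pi.add_apply, Pi.smul_apply, Function.comp_apply, smul_eq_mul]
  ring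

end GalileanShift

section BoostPotential

variable (lam s : ℝ)

lemma contDiff_boostPotential {n : WithTop ℕ∞} : ContDiff ℝ n (boostPotential lam s) := by
  unfold boostPotential
  fun_prop

lemma Dx_boostPotential : Dx (boostPotential lam s) = fun _ => s / (2 * lam) := by
  ext p
  simp only [Dx, boostPotential, deriv_div_const, deriv_add_const', deriv_mul_const_field',
    deriv_const_mul_id']
  ring

lemma Dy_boostPotential : Dy (boostPotential lam s) = 0 := by
  ext p
  simp [Dy, boostPotential]

lemma Dt_boostPotential : Dt (boostPotential lam s) = fun _ => s ^ 2 / (4 * lam) := by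
  ext p
  simp [Dt, boostPotential]

end BoostPotential

section GalileanBoost

variable {h : ℝ × ℝ × ℝ → ℝ} (lam s : ℝ)

lemma Dx_galileanBoost (hh : Differentiable ℝ h) :
    Dx (galileanBoost lam s h) = Dx h ∘ galileanShift s + fun _ => s / (2 * lam) := by
  rw [galileanBoost, Dx_add (hh.comp ((contDiff_galileanShift s).differentiable one_ne_zero))
    ((contDiff_boostPotential lam s).differentiable one_ne_zero), Dx_comp_galileanShift,
    Dx_boostPotential]

lemma Dy_galileanBoost (hh : Differentiable ℝ h) :
    Dy (galileanBoost lam s h) = Dy h ∘ galileanShift s := by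
  rw [galileanBoost, Dy_add (hh.comp ((contDiff_galileanShift s).differentiable one_ne_zero))
    ((contDiff_boostPotential lam s).differentiable one_ne_zero), Dy_comp_galileanShift,
    Dy_boostPotential, add_zero]

lemma Dt_galileanBoost (hh : Differentiable ℝ h) :
    Dt (galileanBoost lam s h) =
      Dt h ∘ galileanShift s + s • Dx h ∘ galileanShift s + fun _ => s ^ 2 / (4 * lam) := by
  rw [galileanBoost, Dt_add (hh.comp ((contDiff_galileanShift s).differentiable one_ne_zero))
    ((contDiff_boostPotential lam s).differentiable one_ne_zero), Dt_comp_galileanShift s hh,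
    Dt_boostPotential]

end GalileanBoost

lemma KSLhs_galileanBoost (ν κ : ℝ) {lam : ℝ} (hlam : lam ≠ 0) (s : ℝ)
    {h : ℝ × ℝ × ℝ → ℝ} (hh : Differentiable ℝ h) (p : ℝ × ℝ × ℝ) :
    KSLhs ν κ lam (galileanBoost lam s h) p = KSLhs ν κ lam h (galileanShift s p) := by
  simp only [KSLhs, Dx_galileanBoost lam s hh, Dy_galileanBoost lam s hh,
    Dt_galileanBoost lam s hh, Dx_add_const, Dx_comp_galileanShift, Dy_comp_galileanShift,
    Pi.add_apply, Pi.smul_apply, Function.comp_apply, smul_eq_mul]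
  field_simp
  ring

lemma IsKSSolution.galileanBoost {ν κ lam : ℝ} (hlam : lam ≠ 0) {f : ℝ × ℝ × ℝ → ℝ}
    (hf : IsKSSolution ν κ lam f) (s : ℝ) : IsKSSolution ν κ lam (galileanBoost lam s f) :=
  ⟨(hf.1.comp (contDiff_galileanShift s)).add (contDiff_boostPotential lam s), fun p => by
    rw [KSLhs_galileanBoost ν κ hlam s (hf.1.differentiable (by norm_num)), hf.2]⟩

/-- Invariance of the K-S solution set under the Galilean boost group G₆ generated by
V₆ = t∂ₓ + (x/(2λ))∂ₕ. -/
theorem ks_invariance_G6 (ν κ lam : ℝ) (hlam : lam ≠ 0) (f : ℝ × ℝ × ℝ → ℝ)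
    (hf : IsKSSolution ν κ lam f) (s : ℝ) :
    IsKSSolution ν κ lam
      (fun p => f (p.1 + s * p.2.2, p.2.1, p.2.2)
        + (2 * p.1 * s + p.2.2 * s ^ 2) / (4 * lam)) :=
  hf.galileanBoost hlam s
end
end

section
/- Let ν, κ, λ be real constants and let f : ℝ × ℝ → ℝ, written f(z,w), be four times continuously differentiable and satisfy the similarity-reduced equation ∂_w f + 4νz·∂_z²f + 4ν·∂_z f + 16κz²·∂_z⁴f + 64κz·∂_z³f + 32κ·∂_z²f − 4λz·(∂_z f)² = 0 at every point (z,w) with z ≥ 0. Then the rotationally invariant function h(x,y,t) := f(x² + y², t) is a solution of the (2+1)-dimensional Kuramoto–Sivashinsky equation. (This is the similarity reduction corresponding to the rotation symmetry V₅ = y∂ₓ − x∂ᵧ, with invariants z = x² + y², w = t.) -/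
noncomputable section

/-- Partial derivative in the first (z) variable of a function of (z,w) ∈ ℝ². -/
def Dz (f : ℝ × ℝ → ℝ) : ℝ × ℝ → ℝ :=
  fun q => deriv (fun z : ℝ => f (z, q.2)) q.1

/-- Partial derivative in the second (w) variable of a function of (z,w) ∈ ℝ². -/
def Dw (f : ℝ × ℝ → ℝ) : ℝ × ℝ → ℝ :=
  fun q => deriv (fun w : ℝ => f (q.1, w)) q.2

/-! Along a line in the `x`-direction, `h(x, y, t) = g(x² + c)` with `g = f(·, t)` and `c = y²`,
so every `x`-derivative of `h` is a one-variable chain-rule computation, e.g.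
`∂ₓ²h = 2 f_z + 4x² f_zz`; the `y`-derivatives follow from the symmetry `(x, y) ↦ (y, x)` of `h`.
With `z = x² + y²` one gets `(∂ₓ² + ∂ᵧ²) h = 4 f_z + 4z f_zz` and
`(∂ₓ⁴ + 2∂ₓ²∂ᵧ² + ∂ᵧ⁴) h = 32 f_zz + 64z f_zzz + 16z² f_zzzz`, so the Kuramoto–Sivashinsky
operator applied to `h` at `(x, y, t)` is the reduced operator applied to `f` at `(z, t)`. -/

section OneVariable

variable {𝕜 : Type*} [NontriviallyNormedField 𝕜] {g : 𝕜 → 𝕜}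

theorem hasDerivAt_comp_sq_add {x c : 𝕜} (hg : DifferentiableAt 𝕜 g (x ^ 2 + c)) :
    HasDerivAt (fun x => g (x ^ 2 + c)) (2 * x * deriv g (x ^ 2 + c)) x := by
  refine (hg.hasDerivAt.comp x ((hasDerivAt_pow 2 x).add_const c)).congr_deriv ?_
  push_cast; ring

theorem deriv_comp_sq_add (hg : Differentiable 𝕜 g) (c : 𝕜) :
    deriv (fun x => g (x ^ 2 + c)) = fun x => 2 * x * deriv g (x ^ 2 + c) :=
  funext fun _ => (hasDerivAt_comp_sq_add (hg _)).deriv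

theorem deriv2_comp_sq_add (hg : ContDiff 𝕜 2 g) (c : 𝕜) :
    deriv (deriv (fun x => g (x ^ 2 + c))) =
      fun x => 2 * deriv g (x ^ 2 + c) + 4 * x ^ 2 * deriv (deriv g) (x ^ 2 + c) := by
  have hg' : ContDiff 𝕜 1 (deriv g) := hg.deriv'
  rw [deriv_comp_sq_add (hg.differentiable two_ne_zero)]
  funext x
  refine ((((hasDerivAt_id' x).const_mul 2).mul
    (hasDerivAt_comp_sq_add (hg'.differentiable one_ne_zero _))).congr_deriv ?_).deriv
  ring

theorem deriv3_comp_sq_add (hg : ContDiff 𝕜 3 g) (c : 𝕜) :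
    deriv (deriv (deriv (fun x => g (x ^ 2 + c)))) =
      fun x => 12 * x * deriv (deriv g) (x ^ 2 + c)
        + 8 * x ^ 3 * deriv (deriv (deriv g)) (x ^ 2 + c) := by
  have hg' : ContDiff 𝕜 2 (deriv g) := hg.deriv'
  have hg'' : ContDiff 𝕜 1 (deriv (deriv g)) := hg'.deriv'
  rw [deriv2_comp_sq_add (hg.of_le (by norm_num))]
  funext x
  refine ((((hasDerivAt_comp_sq_add (hg'.differentiable two_ne_zero _)).const_mul 2).add
    (((hasDerivAt_pow 2 x).const_mul 4).mul
      (hasDerivAt_comp_sq_add (hg''.differentiable one_ne_zero _)))).congr_deriv ?_).deriv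
  push_cast; ring

theorem deriv4_comp_sq_add (hg : ContDiff 𝕜 4 g) (c : 𝕜) :
    deriv (deriv (deriv (deriv (fun x => g (x ^ 2 + c))))) =
      fun x => 12 * deriv (deriv g) (x ^ 2 + c)
        + 48 * x ^ 2 * deriv (deriv (deriv g)) (x ^ 2 + c)
        + 16 * x ^ 4 * deriv (deriv (deriv (deriv g))) (x ^ 2 + c) := by
  have hg'' : ContDiff 𝕜 2 (deriv (deriv g)) := hg.deriv'.deriv'
  have hg''' : ContDiff 𝕜 1 (deriv (deriv (deriv g))) := hg''.deriv'
  rw [deriv3_comp_sq_add (hg.of_le (by norm_num))]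
  funext x
  refine (((((hasDerivAt_id' x).const_mul 12).mul
    (hasDerivAt_comp_sq_add (hg''.differentiable two_ne_zero _))).add
    (((hasDerivAt_pow 3 x).const_mul 8).mul
      (hasDerivAt_comp_sq_add (hg'''.differentiable one_ne_zero _)))).congr_deriv ?_).deriv
  push_cast; ring

theorem deriv2_const_mul_add_const_mul {φ ψ : 𝕜 → 𝕜} (hφ : ContDiff 𝕜 2 φ)
    (hψ : ContDiff 𝕜 2 ψ) (a b : 𝕜) :
    deriv (deriv (fun x => a * φ x + b * ψ x)) =
      fun x => a * deriv (deriv φ) x + b * deriv (deriv ψ) x := by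
  have hφ' : Differentiable 𝕜 (deriv φ) := hφ.deriv'.differentiable one_ne_zero
  have hψ' : Differentiable 𝕜 (deriv ψ) := hψ.deriv'.differentiable one_ne_zero
  have h1 : deriv (fun x => a * φ x + b * ψ x) = fun x => a * deriv φ x + b * deriv ψ x :=
    funext fun x => ((((hφ.differentiable two_ne_zero) x).hasDerivAt.const_mul a).add
      (((hψ.differentiable two_ne_zero) x).hasDerivAt.const_mul b)).deriv
  rw [h1]
  funext x
  exact (((hφ' x).hasDerivAt.const_mul a).add ((hψ' x).hasDerivAt.const_mul b)).deriv

end OneVariable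

def radialLift (f : ℝ × ℝ → ℝ) : ℝ × ℝ × ℝ → ℝ := fun p => f (p.1 ^ 2 + p.2.1 ^ 2, p.2.2)

def swapXY (p : ℝ × ℝ × ℝ) : ℝ × ℝ × ℝ := (p.2.1, p.1, p.2.2)

theorem iterate_Dy_of_comp_swapXY {h : ℝ × ℝ × ℝ → ℝ} (hs : h ∘ swapXY = h) (n : ℕ) :
    Dy^[n] h = Dx^[n] h ∘ swapXY := by
  induction n with
  | zero => exact hs.symm
  | succ n ih => rw [Function.iterate_succ_apply', Function.iterate_succ_apply', ih]; rfl

section RadialLift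

variable {f : ℝ × ℝ → ℝ}

theorem radialLift_comp_swapXY : radialLift f ∘ swapXY = radialLift f := by
  funext p
  simp only [Function.comp, radialLift, swapXY, add_comm]

theorem iterate_Dy_radialLift (n : ℕ) (x y t : ℝ) :
    Dy^[n] (radialLift f) (x, y, t) = Dx^[n] (radialLift f) (y, x, t) :=
  congrFun (iterate_Dy_of_comp_swapXY radialLift_comp_swapXY n) (x, y, t)

theorem Dt_radialLift (x y t : ℝ) : Dt (radialLift f) (x, y, t) = Dw f (x ^ 2 + y ^ 2, t) := rfl

theorem Dx_radialLift (hf : Differentiable ℝ f) (x y t : ℝ) :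
    Dx (radialLift f) (x, y, t) = 2 * x * Dz f (x ^ 2 + y ^ 2, t) :=
  congrFun (deriv_comp_sq_add (g := fun z => f (z, t)) (by fun_prop) (y ^ 2)) x

theorem Dy_radialLift (hf : Differentiable ℝ f) (x y t : ℝ) :
    Dy (radialLift f) (x, y, t) = 2 * y * Dz f (x ^ 2 + y ^ 2, t) := by
  rw [show Dy (radialLift f) (x, y, t) = Dx (radialLift f) (y, x, t) from
    iterate_Dy_radialLift 1 x y t, Dx_radialLift hf, add_comm (y ^ 2)]

theorem Dx_Dx_radialLift (hf : ContDiff ℝ 2 f) (x y t : ℝ) :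
    Dx (Dx (radialLift f)) (x, y, t) =
      2 * Dz f (x ^ 2 + y ^ 2, t) + 4 * x ^ 2 * Dz (Dz f) (x ^ 2 + y ^ 2, t) :=
  congrFun (deriv2_comp_sq_add (g := fun z => f (z, t)) (by fun_prop) (y ^ 2)) x

theorem Dy_Dy_radialLift (hf : ContDiff ℝ 2 f) (x y t : ℝ) :
    Dy (Dy (radialLift f)) (x, y, t) =
      2 * Dz f (x ^ 2 + y ^ 2, t) + 4 * y ^ 2 * Dz (Dz f) (x ^ 2 + y ^ 2, t) := by
  rw [show Dy (Dy (radialLift f)) (x, y, t) = Dx (Dx (radialLift f)) (y, x, t) from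
    iterate_Dy_radialLift 2 x y t, Dx_Dx_radialLift hf, add_comm (y ^ 2)]

theorem Dx_Dx_Dx_Dx_radialLift (hf : ContDiff ℝ 4 f) (x y t : ℝ) :
    Dx (Dx (Dx (Dx (radialLift f)))) (x, y, t) =
      12 * Dz (Dz f) (x ^ 2 + y ^ 2, t) + 48 * x ^ 2 * Dz (Dz (Dz f)) (x ^ 2 + y ^ 2, t)
        + 16 * x ^ 4 * Dz (Dz (Dz (Dz f))) (x ^ 2 + y ^ 2, t) :=
  congrFun (deriv4_comp_sq_add (g := fun z => f (z, t)) (by fun_prop) (y ^ 2)) x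

theorem Dy_Dy_Dy_Dy_radialLift (hf : ContDiff ℝ 4 f) (x y t : ℝ) :
    Dy (Dy (Dy (Dy (radialLift f)))) (x, y, t) =
      12 * Dz (Dz f) (x ^ 2 + y ^ 2, t) + 48 * y ^ 2 * Dz (Dz (Dz f)) (x ^ 2 + y ^ 2, t)
        + 16 * y ^ 4 * Dz (Dz (Dz (Dz f))) (x ^ 2 + y ^ 2, t) := by
  rw [show Dy (Dy (Dy (Dy (radialLift f)))) (x, y, t) = Dx (Dx (Dx (Dx (radialLift f)))) (y, x, t)
    from iterate_Dy_radialLift 4 x y t, Dx_Dx_Dx_Dx_radialLift hf, add_comm (y ^ 2)]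

theorem Dx_Dx_Dy_Dy_radialLift (hf : ContDiff ℝ 4 f) (x y t : ℝ) :
    Dx (Dx (Dy (Dy (radialLift f)))) (x, y, t) =
      4 * Dz (Dz f) (x ^ 2 + y ^ 2, t) + 8 * (x ^ 2 + y ^ 2) * Dz (Dz (Dz f)) (x ^ 2 + y ^ 2, t)
        + 16 * x ^ 2 * y ^ 2 * Dz (Dz (Dz (Dz f))) (x ^ 2 + y ^ 2, t) := by
  have hu' : ContDiff ℝ 3 (deriv fun z => f (z, t)) := ContDiff.deriv' (by fun_prop)
  have hu'' : ContDiff ℝ 2 (deriv (deriv fun z => f (z, t))) := hu'.deriv'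
  have hA : ContDiff ℝ 2 fun x' => deriv (fun z => f (z, t)) (x' ^ 2 + y ^ 2) :=
    (hu'.of_le (by norm_num)).comp (by fun_prop)
  have hB : ContDiff ℝ 2 fun x' => deriv (deriv fun z => f (z, t)) (x' ^ 2 + y ^ 2) :=
    hu''.comp (by fun_prop)
  have hslice : (fun x' => Dy (Dy (radialLift f)) (x', y, t)) = fun x' =>
      2 * deriv (fun z => f (z, t)) (x' ^ 2 + y ^ 2)
        + 4 * y ^ 2 * deriv (deriv fun z => f (z, t)) (x' ^ 2 + y ^ 2) :=
    funext fun x' => Dy_Dy_radialLift (hf.of_le (by norm_num)) x' y t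
  change deriv (deriv (fun x' => Dy (Dy (radialLift f)) (x', y, t))) x = _
  rw [hslice, deriv2_const_mul_add_const_mul hA hB,
    deriv2_comp_sq_add (hu'.of_le (by norm_num)), deriv2_comp_sq_add hu'']
  simp only [Dz]
  ring

end RadialLift

/-- Similarity reduction for the rotation V₅ = y∂ₓ − x∂ᵧ (invariants z = x²+y², w = t):
if f(z,w) is a C⁴ solution of
∂_w f + 4νz ∂_z²f + 4ν ∂_z f + 16κz² ∂_z⁴f + 64κz ∂_z³f + 32κ ∂_z²f − 4λz(∂_z f)² = 0
for z ≥ 0, then h(x,y,t) = f(x²+y²,t) solves the Kuramoto–Sivashinsky equation. -/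
theorem ks_similarity_reduction_V5 (ν κ lam : ℝ) (f : ℝ × ℝ → ℝ)
    (hf : ContDiff ℝ 4 f)
    (hred : ∀ q : ℝ × ℝ, 0 ≤ q.1 →
      Dw f q + 4 * ν * q.1 * Dz (Dz f) q + 4 * ν * Dz f q
        + 16 * κ * q.1 ^ 2 * Dz (Dz (Dz (Dz f))) q
        + 64 * κ * q.1 * Dz (Dz (Dz f)) q + 32 * κ * Dz (Dz f) q
        - 4 * lam * q.1 * (Dz f q) ^ 2 = 0) :
    IsKSSolution ν κ lam (fun p : ℝ × ℝ × ℝ => f (p.1 ^ 2 + p.2.1 ^ 2, p.2.2)) := by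
  refine ⟨hf.comp (by fun_prop), ?_⟩
  rintro ⟨x, y, t⟩
  have hf1 : Differentiable ℝ f := hf.differentiable (by norm_num)
  have hf2 : ContDiff ℝ 2 f := hf.of_le (by norm_num)
  change KSLhs ν κ lam (radialLift f) (x, y, t) = 0
  rw [KSLhs, Dt_radialLift, Dx_radialLift hf1, Dy_radialLift hf1, Dx_Dx_radialLift hf2,
    Dy_Dy_radialLift hf2, Dx_Dx_Dx_Dx_radialLift hf, Dy_Dy_Dy_Dy_radialLift hf,
    Dx_Dx_Dy_Dy_radialLift hf]
  linear_combination hred (x ^ 2 + y ^ 2, t) (by positivity)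
end
end

section
/- Let ν, κ, λ be real constants with λ ≠ 0, and let f : ℝ × ℝ → ℝ, written f(z,w), be four times continuously differentiable and satisfy the similarity-reduced equation ∂_w f + ν·∂_z²f + κ·∂_z⁴f − λ·(∂_z f)² − ν/(2λw) = 0 at every point (z,w) with w ≠ 0. Then the function h(x,y,t) := f(y,t) − x²/(4λt) satisfies the (2+1)-dimensional Kuramoto–Sivashinsky equation at every point (x,y,t) with t ≠ 0. (This is the similarity reduction corresponding to the Galilean-boost symmetry V₆ = t∂ₓ + (x/(2λ))∂ₕ, with invariants z = y, w = t and r = h + x²/(4λt).) -/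
/-!
The profile `h = f(y,t) - x²/(4λt)` is quadratic in `x` with coefficients independent of `y`, so
all `x`-derivatives of order at least three and all mixed derivatives vanish, while the `y`- and
`t`-derivatives of the `f`-part are those of `f`. The `x`-part contributes `x²/(4λt²)` to `∂ₜh`,
which cancels against `λ(∂ₓh)² = x²/(4λt²)`, and `ν∂ₓₓh = -ν/(2λt)` is exactly the inhomogeneous
term of the reduced equation.
-/

noncomputable section

theorem Dx_comp_snd (g : ℝ × ℝ → ℝ) : Dx (fun p => g p.2) = 0 := by
  funext p
  simp [Dx]

theorem Dy_comp_snd (g : ℝ × ℝ → ℝ) : Dy (fun p => g p.2) = fun p => Dz g p.2 := rfl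

theorem hasDerivAt_const_div_mul {𝕜 : Type*} [NontriviallyNormedField 𝕜] (a c : 𝕜) {t : 𝕜}
    (ht : t ≠ 0) :
    HasDerivAt (fun s => a / (c * s)) (-(a / (c * t ^ 2))) t := by
  have h := (hasDerivAt_inv ht).const_mul (a / c)
  rw [show (fun s => a / (c * s)) = fun s => a / c * s⁻¹ from
    funext fun s => by rw [div_mul_eq_div_div, div_eq_mul_inv]]
  exact h.congr_deriv (by ring)

def galileanProfile (lam : ℝ) (f : ℝ × ℝ → ℝ) : ℝ × ℝ × ℝ → ℝ :=
  fun p => f (p.2.1, p.2.2) - p.1 ^ 2 / (4 * lam * p.2.2)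

section galileanProfile

variable (lam : ℝ) (f : ℝ × ℝ → ℝ)

theorem Dx_galileanProfile :
    Dx (galileanProfile lam f) = fun p => -(p.1 / (2 * lam * p.2.2)) := by
  funext p
  simp only [Dx, galileanProfile, deriv_const_sub, deriv_div_const, deriv_pow_field]
  ring

theorem Dx_Dx_galileanProfile :
    Dx (Dx (galileanProfile lam f)) = fun p => -(1 / (2 * lam * p.2.2)) := by
  rw [Dx_galileanProfile]
  funext p
  simp only [Dx, deriv.fun_neg, deriv_div_const, deriv_id'']

theorem Dx_Dx_Dx_galileanProfile : Dx (Dx (Dx (galileanProfile lam f))) = 0 := by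
  rw [Dx_Dx_galileanProfile]
  exact Dx_comp_snd fun q => -(1 / (2 * lam * q.2))

theorem Dy_galileanProfile : Dy (galileanProfile lam f) = fun p => Dz f p.2 := by
  funext p
  simp only [Dy, galileanProfile, deriv_sub_const]
  rfl

theorem Dt_galileanProfile (hf : Differentiable ℝ f) {p : ℝ × ℝ × ℝ} (hp : p.2.2 ≠ 0) :
    Dt (galileanProfile lam f) p = Dw f p.2 + p.1 ^ 2 / (4 * lam * p.2.2 ^ 2) := by
  have hft : HasDerivAt (fun s => f (p.2.1, s)) (Dw f p.2) p.2.2 :=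
    (hf.comp (differentiable_const _ |>.prodMk differentiable_id) _).hasDerivAt
  exact ((hft.fun_sub (hasDerivAt_const_div_mul (p.1 ^ 2) (4 * lam) hp)).deriv).trans
    (sub_neg_eq_add _ _)

theorem KSLhs_galileanProfile {ν κ : ℝ} (hlam : lam ≠ 0) (hf : Differentiable ℝ f)
    {p : ℝ × ℝ × ℝ} (hp : p.2.2 ≠ 0) :
    KSLhs ν κ lam (galileanProfile lam f) p =
      Dw f p.2 + ν * Dz (Dz f) p.2 + κ * Dz (Dz (Dz (Dz f))) p.2 - lam * (Dz f p.2) ^ 2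
        - ν / (2 * lam * p.2.2) := by
  have hDx4 : Dx (Dx (Dx (Dx (galileanProfile lam f)))) = 0 := by
    rw [Dx_Dx_Dx_galileanProfile]; exact Dx_comp_snd 0
  have hDxxyy : Dx (Dx (Dy (Dy (galileanProfile lam f)))) = 0 := by
    rw [Dy_galileanProfile, Dy_comp_snd, Dx_comp_snd]; exact Dx_comp_snd 0
  have hDy4 : Dy (Dy (Dy (Dy (galileanProfile lam f)))) = fun p => Dz (Dz (Dz (Dz f))) p.2 := by
    rw [Dy_galileanProfile]; rfl
  have hcancel : lam * (p.1 / (2 * lam * p.2.2)) ^ 2 = p.1 ^ 2 / (4 * lam * p.2.2 ^ 2) := by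
    field_simp; ring
  rw [KSLhs, hDx4, hDxxyy, hDy4, Dx_Dx_galileanProfile, Dy_galileanProfile, Dy_comp_snd,
    Dx_galileanProfile, Dt_galileanProfile lam f hf hp, Pi.zero_apply]
  linear_combination -hcancel

end galileanProfile

/-- Similarity reduction for the Galilean boost V₆ = t∂ₓ + (x/(2λ))∂ₕ (invariants
z = y, w = t, r = h + x²/(4λt)): if f(z,w) is a C⁴ solution of
∂_w f + ν ∂_z²f + κ ∂_z⁴f − λ(∂_z f)² − ν/(2λw) = 0 for w ≠ 0, then
h(x,y,t) = f(y,t) − x²/(4λt) satisfies the Kuramoto–Sivashinsky equation wherever t ≠ 0. -/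
theorem ks_similarity_reduction_V6 (ν κ lam : ℝ) (hlam : lam ≠ 0) (f : ℝ × ℝ → ℝ)
    (hf : ContDiff ℝ 4 f)
    (hred : ∀ q : ℝ × ℝ, q.2 ≠ 0 →
      Dw f q + ν * Dz (Dz f) q + κ * Dz (Dz (Dz (Dz f))) q - lam * (Dz f q) ^ 2
        - ν / (2 * lam * q.2) = 0) :
    ∀ p : ℝ × ℝ × ℝ, p.2.2 ≠ 0 →
      KSLhs ν κ lam
        (fun p : ℝ × ℝ × ℝ => f (p.2.1, p.2.2) - p.1 ^ 2 / (4 * lam * p.2.2)) p = 0 :=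
  fun p hp =>
    (KSLhs_galileanProfile lam f hlam (hf.differentiable (by norm_num)) hp).trans (hred p.2 hp)
end
end
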